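/- Let A_t := ℚ[t][H]/(H⁵) and consider the twisted I-function I(t,q,z) := z·Σ_{d≥0} q^d · (Π_{j=1}^{5d}(5H + jz − t)) / (Π_{k=1}^{d}(H + kz)⁵), an element of A_t[z, z⁻¹][[q]] (each factor (H + kz)^{−1} is expanded as Σ_{i=0}^{4}(−1)^i H^i (kz)^{−i−1}, using H⁵ = 0). Let D_H := z·q·d/dq + H. Then (D_H⁵ − q·Π_{k=1}^{5}(5D_H + kz − t)) I(t,q,z) = 0, where each factor denotes composition of the operators f ↦ 5D_H(f) + (kz − t)·f. (This is the Picard–Fuchs equation satisfied by the I-function of the twisted Gromov–Witten theory of ℙ⁴.) -/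

import Mathlib

/-!
Both `D_H` and `5 D_H + kz - t` act on the `q^d`-coefficient as multiplication by
`H + dz` and `5H + (5d + k)z - t`. The equation therefore says `H^5 I_0 = 0`, true as
`H^5 = 0`, and `(H + (d+1)z)^5 I_{d+1} = Π_{k=1}^{5} (5H + (5d + k)z - t) I_d`, which is
the ratio of consecutive terms of `I` once one knows that the truncated series `Einv k`
inverts `H + kz`, which holds because `H` is nilpotent.
-/

noncomputable section

open LaurentPolynomial

/-- The ring `A_t = ℚ[t][H]/(H⁵)`, where `ℚ[t]` is `Polynomial ℚ` and `H` is the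
variable of the outer polynomial ring. -/
abbrev Aring : Type :=
  Polynomial (Polynomial ℚ) ⧸
    Ideal.span ({Polynomial.X ^ 5} : Set (Polynomial (Polynomial ℚ)))

/-- The class `H ∈ A_t`. -/
def Hcl : Aring := Ideal.Quotient.mk _ Polynomial.X

/-- The equivariant parameter `t ∈ A_t`. -/
def tcl : Aring := Ideal.Quotient.mk _ (Polynomial.C Polynomial.X)

/-- The ring `A_t[z, z⁻¹]` of Laurent polynomials in `z` over `A_t`. -/
abbrev Rring : Type := LaurentPolynomial Aring

instance : CommSemiring Rring := @AddMonoidAlgebra.commSemiring Aring ℤ inferInstance inferInstance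

/-- The variable `z ∈ A_t[z, z⁻¹]`. -/
def zL : Rring := T 1

/-- `H` viewed in `A_t[z, z⁻¹]`. -/
def HL : Rring := LaurentPolynomial.C Hcl

/-- `t` viewed in `A_t[z, z⁻¹]`. -/
def tL : Rring := LaurentPolynomial.C tcl

/-- The expansion of `(H + kz)⁻¹` as `Σ_{i=0}^{4} (−1)^i H^i (kz)^{−i−1}` (using `H⁵ = 0`). -/
def Einv (k : ℕ) : Rring :=
  ∑ i ∈ Finset.range 5,
    (-1 : Rring) ^ i * HL ^ i * algebraMap ℚ Rring (1 / (k : ℚ) ^ (i + 1)) * T (-(i + 1) : ℤ)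

/-- The twisted `I`-function
`I(t,q,z) = z·Σ_{d≥0} q^d (Π_{j=1}^{5d}(5H + jz − t)) / (Π_{k=1}^{d}(H + kz)⁵)`,
an element of `A_t[z,z⁻¹][[q]]`. -/
def Itwist : PowerSeries Rring :=
  PowerSeries.mk fun d =>
    zL * (∏ j ∈ Finset.Icc 1 (5 * d), (5 * HL + (j : Rring) * zL - tL))
      * ∏ k ∈ Finset.Icc 1 d, (Einv k) ^ 5

/-- The operator `z·q·d/dq`. -/
def zqd (f : PowerSeries Rring) : PowerSeries Rring :=
  PowerSeries.mk fun n => (n : Rring) * zL * PowerSeries.coeff n f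

/-- The operator `D_H = z·q·d/dq + H`. -/
def DH (f : PowerSeries Rring) : PowerSeries Rring :=
  zqd f + PowerSeries.C HL * f

/-- The operator `f ↦ 5·D_H(f) + (kz − t)·f`. -/
def opk (k : ℕ) (f : PowerSeries Rring) : PowerSeries Rring :=
  5 * DH f + PowerSeries.C ((k : Rring) * zL - tL) * f

-- Instance search does not reach `AddMonoidAlgebra.commRing` through the abbreviations.
instance : CommRing Rring := @AddMonoidAlgebra.commRing Aring ℤ inferInstance inferInstance

open Finset

theorem add_mul_sum_neg_pow_mul_pow_succ_eq_one {R : Type*} [CommRing R] {x a u : R} {n : ℕ}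
    (hx : x ^ n = 0) (hau : a * u = 1) :
    (x + a) * ∑ i ∈ range n, (-x) ^ i * u ^ (i + 1) = 1 := by
  have hsum :
      ∑ i ∈ range n, (-x) ^ i * u ^ (i + 1) = u * ∑ i ∈ range n, (-(x * u)) ^ i := by
    rw [mul_sum]
    exact sum_congr rfl fun i _ => by ring
  have hunit : (x + a) * u = 1 - -(x * u) := by linear_combination hau
  rw [hsum, ← mul_assoc, hunit, mul_neg_geom_sum, neg_pow, mul_pow, hx]
  simp

theorem Finset.prod_Icc_one_add {M : Type*} [CommMonoid M] (f : ℕ → M) (m n : ℕ) :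
    ∏ j ∈ Icc 1 (m + n), f j = (∏ j ∈ Icc 1 m, f j) * ∏ k ∈ range n, f (m + k + 1) := by
  induction n with
  | zero => simp
  | succ n ih =>
    rw [← add_assoc, prod_Icc_succ_top (by omega), ih, prod_range_succ, mul_assoc]

theorem HL_pow_five : HL ^ 5 = 0 := by
  have hH : Hcl ^ 5 = 0 := by
    rw [Hcl, ← map_pow, Ideal.Quotient.eq_zero_iff_mem]
    exact Ideal.subset_span rfl
  rw [HL, ← map_pow, hH, map_zero]

theorem Einv_eq_sum (k : ℕ) :
    Einv k =
      ∑ i ∈ range 5, (-HL) ^ i * (algebraMap ℚ Rring (k : ℚ)⁻¹ * T (-1)) ^ (i + 1) := by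
  refine sum_congr rfl fun i _ => ?_
  rw [mul_pow, ← map_pow, T_pow, neg_pow, one_div, ← inv_pow]
  push_cast
  ring_nf

theorem HL_add_mul_zL_mul_Einv {k : ℕ} (hk : k ≠ 0) : (HL + k * zL) * Einv k = 1 := by
  rw [Einv_eq_sum]
  refine add_mul_sum_neg_pow_mul_pow_succ_eq_one HL_pow_five ?_
  have hkinv : (k : Rring) * algebraMap ℚ Rring (k : ℚ)⁻¹ = 1 := by
    rw [← map_natCast (algebraMap ℚ Rring), ← map_mul,
      mul_inv_cancel₀ (Nat.cast_ne_zero.mpr hk), map_one]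
  have hzT : zL * T (-1) = 1 := by rw [zL, ← T_add]; exact T_zero
  linear_combination zL * T (-1) * hkinv + hzT

theorem coeff_DH (n : ℕ) (f : PowerSeries Rring) :
    PowerSeries.coeff n (DH f) = (HL + n * zL) * PowerSeries.coeff n f := by
  rw [DH, map_add, zqd, PowerSeries.coeff_mk, PowerSeries.coeff_C_mul]
  ring

theorem coeff_opk (k n : ℕ) (f : PowerSeries Rring) :
    PowerSeries.coeff n (opk k f)
      = (5 * HL + ((5 * n + k : ℕ) : Rring) * zL - tL) * PowerSeries.coeff n f := by
  rw [opk, map_add, ← map_ofNat PowerSeries.C, PowerSeries.coeff_C_mul, PowerSeries.coeff_C_mul,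
    coeff_DH]
  push_cast
  ring

theorem pow_five_mul_coeff_succ_Itwist (d : ℕ) :
    (HL + (d + 1 : ℕ) * zL) ^ 5 * PowerSeries.coeff (d + 1) Itwist
      = (∏ k ∈ range 5, (5 * HL + ((5 * d + k + 1 : ℕ) : Rring) * zL - tL))
        * PowerSeries.coeff d Itwist := by
  have hinv : ((HL + (d + 1 : ℕ) * zL) * Einv (d + 1)) ^ 5 = 1 := by
    rw [HL_add_mul_zL_mul_Einv d.succ_ne_zero, one_pow]
  simp only [Itwist, PowerSeries.coeff_mk]
  rw [mul_add_one, prod_Icc_one_add, prod_Icc_succ_top (by omega)]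
  linear_combination zL * (∏ j ∈ Icc 1 (5 * d), (5 * HL + (j : Rring) * zL - tL))
    * (∏ k ∈ range 5, (5 * HL + ((5 * d + k + 1 : ℕ) : Rring) * zL - tL))
    * (∏ k ∈ Icc 1 d, Einv k ^ 5) * hinv

/-- The Picard–Fuchs equation for the twisted `I`-function:
`(D_H⁵ − q·Π_{k=1}^{5}(5D_H + kz − t)) I(t,q,z) = 0`. -/
theorem statement3 :
    DH (DH (DH (DH (DH Itwist))))
      - PowerSeries.X * opk 1 (opk 2 (opk 3 (opk 4 (opk 5 Itwist)))) = 0 := by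
  refine PowerSeries.ext fun n => ?_
  rw [map_sub, map_zero, sub_eq_zero]
  rcases n with _ | d
  · rw [PowerSeries.coeff_zero_X_mul]
    simp only [coeff_DH, Nat.cast_zero, zero_mul, add_zero]
    linear_combination PowerSeries.coeff 0 Itwist * HL_pow_five
  · rw [PowerSeries.coeff_succ_X_mul]
    simp only [coeff_DH, coeff_opk]
    have hrec := pow_five_mul_coeff_succ_Itwist d
    simp only [prod_range_succ, prod_range_zero] at hrec
    push_cast at hrec ⊢
    linear_combination hrec

end
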